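/- arXiv:2310.15452 — 3 statements merged into one kernel-verified Lean document; each statement's English description precedes it below -/
import Mathlib

section
/- Let p₀ ∈ (0,1], α > 1, and let φ: Bⁿ → [0,∞) be such that φ^{p₀} is subharmonic. If the non-tangential maximal function M_α[φ] belongs to L^p(S^{n-1}) for some p > p₀, then φ ∈ ℍ^p(Bⁿ,ℝ) with ‖φ‖_p ≤ ‖M_α[φ]‖_{L^p(S^{n-1})}. -/
open scoped BigOperators
open MeasureTheory

/-- Let `p₀ ∈ (0,1]`, `α > 1`, and `φ : Bⁿ → [0,∞)` be such that `φ^{p₀}` is subharmonic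
(expressed via the sub-mean-value inequality over spheres).  Let `M = M_α[φ]` be the
non-tangential maximal function, `M(ζ) = sup {φ(x) : x ∈ Γ_α(ζ)}` where
`Γ_α(ζ) = {x ∈ Bⁿ : |x - ζ| < α(1-|x|)}`.  If `M ∈ L^p(S^{n-1})` for some `p > p₀`, then
`φ ∈ ℍ^p(Bⁿ,ℝ)` with `‖φ‖_p ≤ ‖M‖_{L^p(S^{n-1})}`, i.e. for every `0 < r < 1` the
`p`-th integral mean of `φ` on the sphere of radius `r` is bounded by the `L^p` norm of `M`. -/
theorem stmt11 {n : ℕ} (hn : 2 ≤ n) (p₀ α p : ℝ)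
    (hp₀ : 0 < p₀) (hp₀1 : p₀ ≤ 1) (hα : 1 < α) (hp : p₀ < p)
    (φ : EuclideanSpace ℝ (Fin n) → ℝ)
    (hφ0 : ∀ x, 0 ≤ φ x)
    (hsub : ∀ w ∈ Metric.ball (0 : EuclideanSpace ℝ (Fin n)) 1, ∀ ϱ : ℝ, 0 ≤ ϱ → ϱ < 1 - ‖w‖ →
      (φ w) ^ p₀ ≤ ⨍ ζ : Metric.sphere (0 : EuclideanSpace ℝ (Fin n)) 1,
        (φ (w + ϱ • (ζ : EuclideanSpace ℝ (Fin n)))) ^ p₀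
          ∂((volume : Measure (EuclideanSpace ℝ (Fin n))).toSphere))
    (M : Metric.sphere (0 : EuclideanSpace ℝ (Fin n)) 1 → ℝ)
    (hM : ∀ ζ, M ζ = sSup (φ '' {x | x ∈ Metric.ball (0 : EuclideanSpace ℝ (Fin n)) 1 ∧
      ‖x - (ζ : EuclideanSpace ℝ (Fin n))‖ < α * (1 - ‖x‖)}))
    (hMbdd : ∀ ζ, BddAbove (φ '' {x | x ∈ Metric.ball (0 : EuclideanSpace ℝ (Fin n)) 1 ∧
      ‖x - (ζ : EuclideanSpace ℝ (Fin n))‖ < α * (1 - ‖x‖)}))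
    (hMLp : Integrable (fun ζ => M ζ ^ p)
      ((volume : Measure (EuclideanSpace ℝ (Fin n))).toSphere)) :
    ∀ r : ℝ, 0 < r → r < 1 →
      (∫ ζ : Metric.sphere (0 : EuclideanSpace ℝ (Fin n)) 1,
          (φ (r • (ζ : EuclideanSpace ℝ (Fin n)))) ^ p
            ∂((volume : Measure (EuclideanSpace ℝ (Fin n))).toSphere)) ^ (1 / p)
        ≤ (∫ ζ : Metric.sphere (0 : EuclideanSpace ℝ (Fin n)) 1, M ζ ^ p
            ∂((volume : Measure (EuclideanSpace ℝ (Fin n))).toSphere)) ^ (1 / p) := by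
  intro r hr0 hr1
  have hp0 : (0:ℝ) < p := lt_trans hp₀ hp
  have key : ∀ ζ : Metric.sphere (0 : EuclideanSpace ℝ (Fin n)) 1,
      φ (r • (ζ : EuclideanSpace ℝ (Fin n))) ≤ M ζ := by
    intro ζ
    rw [hM ζ]
    apply le_csSup (hMbdd ζ)
    have hζ : ‖(ζ : EuclideanSpace ℝ (Fin n))‖ = 1 := norm_eq_of_mem_sphere ζ
    refine ⟨r • (ζ : EuclideanSpace ℝ (Fin n)), ⟨?_, ?_⟩, rfl⟩
    · simp only [Metric.mem_ball, dist_zero_right, norm_smul, Real.norm_eq_abs,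
        abs_of_pos hr0, hζ, mul_one]
      exact hr1
    · have h1 : r • (ζ : EuclideanSpace ℝ (Fin n)) - (ζ : EuclideanSpace ℝ (Fin n))
          = (r - 1) • (ζ : EuclideanSpace ℝ (Fin n)) := by
        rw [sub_smul, one_smul]
      rw [h1, norm_smul, norm_smul, hζ, Real.norm_eq_abs, Real.norm_eq_abs,
        abs_of_nonpos (by linarith), abs_of_pos hr0]
      nlinarith
  have hpow : ∀ ζ : Metric.sphere (0 : EuclideanSpace ℝ (Fin n)) 1,
      φ (r • (ζ : EuclideanSpace ℝ (Fin n))) ^ p ≤ M ζ ^ p := fun ζ =>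
    Real.rpow_le_rpow (hφ0 _) (key ζ) hp0.le
  have hint : (∫ ζ : Metric.sphere (0 : EuclideanSpace ℝ (Fin n)) 1,
        (φ (r • (ζ : EuclideanSpace ℝ (Fin n)))) ^ p
          ∂((volume : Measure (EuclideanSpace ℝ (Fin n))).toSphere))
      ≤ ∫ ζ : Metric.sphere (0 : EuclideanSpace ℝ (Fin n)) 1, M ζ ^ p
          ∂((volume : Measure (EuclideanSpace ℝ (Fin n))).toSphere) := by
    apply integral_mono_of_nonneg
    · exact Filter.Eventually.of_forall fun ζ => Real.rpow_nonneg (hφ0 _) p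
    · exact hMLp
    · exact Filter.Eventually.of_forall hpow
  have h0 : (0:ℝ) ≤ ∫ ζ : Metric.sphere (0 : EuclideanSpace ℝ (Fin n)) 1,
      (φ (r • (ζ : EuclideanSpace ℝ (Fin n)))) ^ p
        ∂((volume : Measure (EuclideanSpace ℝ (Fin n))).toSphere) :=
    integral_nonneg fun ζ => Real.rpow_nonneg (hφ0 _) p
  exact Real.rpow_le_rpow h0 hint (by positivity)
end

section
/- With f as above (f₁ = 2K(1-|x|²)/((K+1)|e₁-x|²), f₂ = 4x₂/((K+1)|e₁-x|²)), the first coordinate f₁ belongs to ℍ¹(B²,ℝ), i.e. sup_{0<r<1} ∫_{S¹} |f₁(rζ)| dσ(ζ) < ∞, but f = (f₁,f₂) does not belong to ℍ¹(B²,ℝ²). -/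
open scoped BigOperators
open MeasureTheory

/-- First coordinate function: `f₁ = 2K(1-|x|²)/((K+1)|e₁-x|²)`. -/
noncomputable def g₁ (K : ℝ) (x : EuclideanSpace ℝ (Fin 2)) : ℝ :=
  2 * K * (1 - (x 0) ^ 2 - (x 1) ^ 2) / ((K + 1) * ((1 - x 0) ^ 2 + (x 1) ^ 2))

/-- Second coordinate function: `f₂ = 4x₂/((K+1)|e₁-x|²)`. -/
noncomputable def g₂ (K : ℝ) (x : EuclideanSpace ℝ (Fin 2)) : ℝ :=
  4 * (x 1) / ((K + 1) * ((1 - x 0) ^ 2 + (x 1) ^ 2))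

/-!
Identify `ℝ²` with `ℂ`. Then `g₁ K z = 2K/(K+1) · Re ((1 + z)/(1 - z))`, and on the circle of
radius `r < 1` this is `2K/(K+1)` times the Poisson kernel of the unit disc with pole `r`, so the
Poisson integral formula for the constant function `1` makes all circle means of `|g₁ K|` equal.
For the second coordinate, `g₂ K (r e^{iθ})` is the `θ`-derivative of
`2/(K+1) · log |1 - r e^{iθ}|²`, so its integral over the upper half circle is
`4/(K+1) · log ((1 + r)/(1 - r))`, which is unbounded as `r → 1`; it bounds the circle mean of
`√(g₁² + g₂²)` from below.
-/

open Real Set Metric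

local notation "ℝ²" => EuclideanSpace ℝ (Fin 2)

section toSphere

variable {E : Type*} [NormedAddCommGroup E] [NormedSpace ℝ E] [FiniteDimensional ℝ E]
  [MeasurableSpace E] [BorelSpace E] [Nontrivial E] (μ : Measure E) [μ.IsAddHaarMeasure]

theorem integral_toSphere_eq_finrank_mul_setIntegral_ball (φ : E → ℝ) :
    ∫ ζ : sphere (0 : E) 1, φ ζ ∂μ.toSphere =
      Module.finrank ℝ E * ∫ x in ball (0 : E) 1, φ (‖x‖⁻¹ • x) ∂μ := by
  set n := Module.finrank ℝ E
  have hn : 0 < n := Module.finrank_pos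
  have hIio : (Measure.volumeIoiPow (n - 1)).real (Iio ⟨1, mem_Ioi.2 one_pos⟩) = 1 / n := by
    rw [measureReal_def, Measure.volumeIoiPow_apply_Iio, Nat.sub_add_cancel hn,
      ENNReal.toReal_ofReal (by positivity), Nat.cast_pred hn, sub_add_cancel]
    simp
  have hball : ∫ x in ball (0 : E) 1, φ (‖x‖⁻¹ • x) ∂μ =
      (∫ ζ : sphere (0 : E) 1, φ ζ ∂μ.toSphere) * (1 / n) := calc
    _ = ∫ x in ({0}ᶜ : Set E), (ball 0 1).indicator (fun x => φ (‖x‖⁻¹ • x)) x ∂μ := by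
      rw [integral_indicator measurableSet_ball, restrict_compl_singleton]
    _ = ∫ p : sphere (0 : E) 1 × Ioi (0 : ℝ), φ p.1 * (Iio ⟨1, mem_Ioi.2 one_pos⟩).indicator 1 p.2
          ∂(μ.toSphere.prod (Measure.volumeIoiPow (n - 1))) := by
      rw [← integral_subtype_comap (measurableSet_singleton _).compl,
        ← (μ.measurePreserving_homeomorphUnitSphereProd).integral_comp
          (Homeomorph.measurableEmbedding _)]
      refine integral_congr_ae (Filter.Eventually.of_forall fun x => ?_)
      simp [indicator, homeomorphUnitSphereProd, homeomorphSphereProd]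
    _ = _ := by
      rw [integral_prod_mul (fun ζ : sphere (0 : E) 1 => φ ζ)
        ((Iio (⟨1, mem_Ioi.2 one_pos⟩ : Ioi (0 : ℝ))).indicator 1), integral_indicator_one
        measurableSet_Iio, hIio]
  rw [hball]
  field_simp

end toSphere

theorem Complex.setIntegral_ball_comp_inv_norm_smul (ψ : ℂ → ℝ) :
    ∫ z in ball (0 : ℂ) 1, ψ (‖z‖⁻¹ • z) = 2⁻¹ * ∫ θ in Ioo (-π) π, ψ (circleMap 0 1 θ) := by
  have hrad : ∫ r in Ioi (0 : ℝ), (Iio 1).indicator id r = 2⁻¹ := by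
    rw [setIntegral_indicator measurableSet_Iio, Ioi_inter_Iio, ← integral_Ioc_eq_integral_Ioo,
      ← intervalIntegral.integral_of_le zero_le_one]
    norm_num [integral_id]
  rw [← hrad, ← setIntegral_prod_mul, ← Measure.volume_eq_prod, ← Complex.polarCoord_target,
    ← integral_indicator measurableSet_ball, ← Complex.integral_comp_polarCoord_symm]
  refine setIntegral_congr_fun Complex.polarCoord.open_target.measurableSet fun p hp => ?_
  obtain ⟨r, θ⟩ := p
  have hr : 0 < r := hp.1
  have hpolar : Complex.polarCoord.symm (r, θ) = r * circleMap 0 1 θ := by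
    rw [Complex.polarCoord_symm_apply, circleMap_zero, Complex.exp_mul_I]
    push_cast
    ring
  have hnorm : ‖Complex.polarCoord.symm (r, θ)‖ = r := by
    rw [Complex.norm_polarCoord_symm, abs_of_pos hr]
  simp only [indicator, mem_ball_zero_iff, hnorm, mem_Iio, id, smul_eq_mul]
  split_ifs
  · rw [hpolar, Complex.real_smul, ← mul_assoc]
    push_cast
    rw [inv_mul_cancel₀ (by exact_mod_cast hr.ne'), one_mul]
  · simp

theorem integral_toSphere_euclideanSpace_fin_two (φ : ℝ² → ℝ) :
    ∫ ζ : sphere (0 : ℝ²) 1, φ ζ ∂(volume : Measure ℝ²).toSphere =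
      2 * π * circleAverage (fun z => φ (Complex.orthonormalBasisOneI.repr z)) 0 1 := by
  set e := Complex.orthonormalBasisOneI.repr
  have hball : e ⁻¹' ball 0 1 = ball 0 1 := by rw [e.preimage_ball, map_zero]
  rw [integral_toSphere_eq_finrank_mul_setIntegral_ball, finrank_euclideanSpace_fin,
    ← Complex.orthonormalBasisOneI.measurePreserving_repr.setIntegral_preimage_emb
      e.toHomeomorph.measurableEmbedding, hball]
  simp only [LinearIsometryEquiv.norm_map, ← map_smul]
  rw [Complex.setIntegral_ball_comp_inv_norm_smul (fun z => φ (e z)),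
    circleAverage_eq_integral_add (-π),
    intervalIntegral.integral_comp_add_right (fun θ => φ (e (circleMap 0 1 θ))), zero_add,
    show 2 * π + -π = π by ring, intervalIntegral.integral_of_le (by linarith [pi_pos]),
    integral_Ioc_eq_integral_Ioo, smul_eq_mul]
  push_cast
  field_simp

theorem circleAverage_poissonKernel {c w : ℂ} {R : ℝ} (hw : w ∈ ball c R) :
    circleAverage (poissonKernel c w) c R = 1 := by
  simpa [← Pi.one_def] using
    InnerProductSpace.harmonicContOnCl_const (c := (1 : ℝ)).circleAverage_poissonKernel_smul hw

theorem poissonKernel_nonneg {c w z : ℂ} (h : ‖w - c‖ ≤ ‖z - c‖) : 0 ≤ poissonKernel c w z :=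
  div_nonneg (sub_nonneg.2 (pow_le_pow_left₀ (norm_nonneg _) h 2)) (sq_nonneg _)

theorem smul_repr_apply_zero (r : ℝ) (z : ℂ) :
    (r • Complex.orthonormalBasisOneI.repr z) 0 = r * z.re := rfl

theorem smul_repr_apply_one (r : ℝ) (z : ℂ) :
    (r • Complex.orthonormalBasisOneI.repr z) 1 = r * z.im := rfl

theorem g₁_smul_repr (K r : ℝ) {z : ℂ} (hz : ‖z‖ = 1) :
    g₁ K (r • Complex.orthonormalBasisOneI.repr z) = 2 * K / (K + 1) * poissonKernel 0 r z := by
  have hz2 : z.re * z.re + z.im * z.im = 1 := by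
    rw [← Complex.normSq_apply, ← Complex.sq_norm, hz, one_pow]
  rw [g₁, smul_repr_apply_zero, smul_repr_apply_one, poissonKernel, sub_zero, sub_zero, hz,
    one_pow, Complex.norm_real, norm_eq_abs, sq_abs, Complex.sq_norm, Complex.normSq_apply,
    Complex.sub_re, Complex.sub_im, Complex.ofReal_re, Complex.ofReal_im, sub_zero,
    div_mul_div_comm]
  congr 1
  · linear_combination (-2 * K * r ^ 2) * hz2
  · linear_combination ((K + 1) * (r ^ 2 - 1)) * hz2

theorem integral_toSphere_abs_g₁ (K : ℝ) {r : ℝ} (hr : |r| < 1) :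
    ∫ ζ : sphere (0 : ℝ²) 1, |g₁ K (r • (ζ : ℝ²))| ∂(volume : Measure ℝ²).toSphere =
      2 * π * |2 * K / (K + 1)| := by
  rw [integral_toSphere_euclideanSpace_fin_two (fun x => |g₁ K (r • x)|),
    circleAverage_congr_sphere (f₂ := |2 * K / (K + 1)| • poissonKernel 0 r), circleAverage_smul,
    circleAverage_poissonKernel (by simpa using hr), smul_eq_mul, mul_one]
  intro z hz
  have hz : ‖z‖ = 1 := by simpa using hz
  simp only [Pi.smul_apply]
  rw [g₁_smul_repr K r hz, abs_mul, abs_of_nonneg (poissonKernel_nonneg (by simp [hz, hr.le])),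
    smul_eq_mul]

theorem mul_cos_lt_one {r : ℝ} (hr : |r| < 1) (θ : ℝ) : r * cos θ < 1 :=
  (le_abs_self _).trans_lt <| by
    rw [abs_mul]
    nlinarith [abs_cos_le_one θ, abs_nonneg r, abs_nonneg (cos θ)]

theorem one_sub_two_mul_mul_cos_add_sq_pos {r : ℝ} (hr : |r| < 1) (θ : ℝ) :
    0 < 1 - 2 * r * cos θ + r ^ 2 := by
  have h := sub_pos.2 (mul_cos_lt_one hr θ)
  nlinarith [sin_sq_add_cos_sq θ, mul_pos h h, sq_nonneg (r * sin θ)]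

theorem smul_repr_circleMap_apply_zero (r θ : ℝ) :
    (r • Complex.orthonormalBasisOneI.repr (circleMap 0 1 θ)) 0 = r * cos θ := by
  simp [circleMap]

theorem smul_repr_circleMap_apply_one (r θ : ℝ) :
    (r • Complex.orthonormalBasisOneI.repr (circleMap 0 1 θ)) 1 = r * sin θ := by
  simp [circleMap]

theorem g₂_smul_repr_circleMap (K r θ : ℝ) :
    g₂ K (r • Complex.orthonormalBasisOneI.repr (circleMap 0 1 θ)) =
      4 / (K + 1) * (r * sin θ / (1 - 2 * r * cos θ + r ^ 2)) := by
  rw [g₂, smul_repr_circleMap_apply_zero, smul_repr_circleMap_apply_one, div_mul_div_comm,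
    mul_comm 4]
  congr 2
  linear_combination r ^ 2 * sin_sq_add_cos_sq θ

theorem continuous_g₂_smul_repr_circleMap (K : ℝ) {r : ℝ} (hr : |r| < 1) :
    Continuous fun θ => g₂ K (r • Complex.orthonormalBasisOneI.repr (circleMap 0 1 θ)) := by
  simp only [g₂_smul_repr_circleMap]
  fun_prop (disch := exact fun θ => (one_sub_two_mul_mul_cos_add_sq_pos hr θ).ne')

theorem integral_g₂_smul_repr_circleMap (K : ℝ) {r : ℝ} (hr : |r| < 1) :
    ∫ θ in 0..π, g₂ K (r • Complex.orthonormalBasisOneI.repr (circleMap 0 1 θ)) =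
      2 / (K + 1) * (log ((1 + r) ^ 2) - log ((1 - r) ^ 2)) := by
  have hderiv : ∀ θ, HasDerivAt (fun θ => 2 / (K + 1) * log (1 - 2 * r * cos θ + r ^ 2))
      (g₂ K (r • Complex.orthonormalBasisOneI.repr (circleMap 0 1 θ))) θ := fun θ => by
    rw [g₂_smul_repr_circleMap]
    exact ((((((hasDerivAt_cos θ).const_mul (2 * r)).const_sub 1).add_const (r ^ 2)).log
      (one_sub_two_mul_mul_cos_add_sq_pos hr θ).ne').const_mul (2 / (K + 1))).congr_deriv
        (by ring)
  rw [intervalIntegral.integral_eq_sub_of_hasDerivAt (fun θ _ => hderiv θ)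
    ((continuous_g₂_smul_repr_circleMap K hr).intervalIntegrable _ _), cos_pi, cos_zero,
    show 1 - 2 * r * -1 + r ^ 2 = (1 + r) ^ 2 by ring,
    show 1 - 2 * r * 1 + r ^ 2 = (1 - r) ^ 2 by ring, mul_sub]

theorem neg_log_le_integral_toSphere_sqrt (K : ℝ) (hK : 0 < K + 1) {r : ℝ} (hr0 : 0 ≤ r)
    (hr1 : r < 1) :
    -(4 / (K + 1) * log (1 - r)) ≤
      ∫ ζ : sphere (0 : ℝ²) 1, √(g₁ K (r • (ζ : ℝ²)) ^ 2 + g₂ K (r • (ζ : ℝ²)) ^ 2)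
        ∂(volume : Measure ℝ²).toSphere := by
  have hr : |r| < 1 := abs_lt.2 ⟨by linarith, hr1⟩
  have hπ := pi_pos
  set F : ℝ → ℝ := fun θ => √(g₁ K (r • Complex.orthonormalBasisOneI.repr (circleMap 0 1 θ)) ^ 2 +
    g₂ K (r • Complex.orthonormalBasisOneI.repr (circleMap 0 1 θ)) ^ 2)
  have hF : Continuous F := continuous_iff_continuousAt.2 fun θ => by
    have hx : (1 - r * cos θ) ^ 2 + (r * sin θ) ^ 2 ≠ 0 :=
      (add_pos_of_pos_of_nonneg (pow_pos (sub_pos.2 (mul_cos_lt_one hr θ)) 2) (sq_nonneg _)).ne'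
    rw [← smul_repr_circleMap_apply_zero, ← smul_repr_circleMap_apply_one] at hx
    refine ContinuousAt.comp (g := fun x : ℝ² => √(g₁ K x ^ 2 + g₂ K x ^ 2)) ?_ (by fun_prop)
    unfold g₁ g₂
    fun_prop (disch := exact mul_ne_zero hK.ne' hx)
  rw [integral_toSphere_euclideanSpace_fin_two (fun x => √(g₁ K (r • x) ^ 2 + g₂ K (r • x) ^ 2)),
    circleAverage_def, smul_eq_mul, ← mul_assoc, mul_inv_cancel₀ (by positivity), one_mul]
  calc -(4 / (K + 1) * log (1 - r))
      ≤ 2 / (K + 1) * (log ((1 + r) ^ 2) - log ((1 - r) ^ 2)) := by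
        have hlog : 0 ≤ log (1 + r) := log_nonneg (by linarith)
        have hc : 0 ≤ 2 / (K + 1) := by positivity
        rw [log_pow, log_pow, show 4 / (K + 1) = 2 / (K + 1) * 2 by ring]
        push_cast
        nlinarith [mul_nonneg hc hlog]
    _ = ∫ θ in 0..π, g₂ K (r • Complex.orthonormalBasisOneI.repr (circleMap 0 1 θ)) :=
        (integral_g₂_smul_repr_circleMap K hr).symm
    _ ≤ ∫ θ in 0..π, F θ :=
        intervalIntegral.integral_mono_on hπ.le
          ((continuous_g₂_smul_repr_circleMap K hr).intervalIntegrable _ _)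
          (hF.intervalIntegrable _ _) fun θ _ => (le_abs_self _).trans
            (sqrt_sq_eq_abs _ ▸ sqrt_le_sqrt (le_add_of_nonneg_left (sq_nonneg _)))
    _ ≤ ∫ θ in 0..2 * π, F θ :=
        intervalIntegral.integral_mono_interval le_rfl hπ.le (by linarith)
          (Filter.Eventually.of_forall fun θ => sqrt_nonneg _) (hF.intervalIntegrable _ _)

/-- For fixed `K ≥ 1`, the first coordinate `f₁` of the map `f = (f₁,f₂)` belongs to
`ℍ¹(B²,ℝ)`, i.e. its integral means over circles of radius `r < 1` are uniformly bounded,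
but `f` itself does not belong to `ℍ¹(B²,ℝ²)`. -/
theorem stmt13 (K : ℝ) (hK : 1 ≤ K) :
    (∃ C : ℝ, ∀ r : ℝ, 0 < r → r < 1 →
      (∫ ζ : Metric.sphere (0 : EuclideanSpace ℝ (Fin 2)) 1,
          |g₁ K (r • (ζ : EuclideanSpace ℝ (Fin 2)))|
            ∂((volume : Measure (EuclideanSpace ℝ (Fin 2))).toSphere)) ≤ C) ∧
    ¬ (∃ C : ℝ, ∀ r : ℝ, 0 < r → r < 1 →
      (∫ ζ : Metric.sphere (0 : EuclideanSpace ℝ (Fin 2)) 1,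
          Real.sqrt ((g₁ K (r • (ζ : EuclideanSpace ℝ (Fin 2)))) ^ 2 +
            (g₂ K (r • (ζ : EuclideanSpace ℝ (Fin 2)))) ^ 2)
            ∂((volume : Measure (EuclideanSpace ℝ (Fin 2))).toSphere)) ≤ C) := by
  have hK1 : 0 < K + 1 := by linarith
  refine ⟨⟨2 * π * |2 * K / (K + 1)|, fun r hr0 hr1 =>
    (integral_toSphere_abs_g₁ K (abs_lt.2 ⟨by linarith, hr1⟩)).le⟩, ?_⟩
  rintro ⟨C, hC⟩
  -- at `r = 1 - exp (-t)` the lower bound is `4 t / (K + 1) > |C|`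
  set t := (K + 1) / 4 * |C| + 1
  have hexp : exp (-t) < 1 := exp_lt_one_iff.2 (neg_neg_of_pos (by positivity))
  have hbound := (neg_log_le_integral_toSphere_sqrt K hK1 (sub_nonneg.2 hexp.le)
    (sub_lt_self 1 (exp_pos _))).trans (hC _ (sub_pos.2 hexp) (sub_lt_self 1 (exp_pos _)))
  rw [sub_sub_cancel, log_exp] at hbound
  have ht : 4 / (K + 1) * t = |C| + 4 / (K + 1) := by
    field_simp
    ring
  nlinarith [le_abs_self C, div_pos four_pos hK1]
end

section
/- Let f = h + ḡ be a pluriharmonic map on 𝔹ⁿ with h locally biholomorphic, g holomorphic, and second dilation ω_f = (conj of D̄f)·(Dh)^{-1} satisfying ‖ω_f(z)‖ ≤ κ < 1 for all z. Then |det J_f(z)| ≤ |det Dh(z)|² (1+κ²)ⁿ and |det J_f(z)| ≥ |det Dh(z)|² (1-κ²)ⁿ for all z ∈ 𝔹ⁿ. -/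
/-!
Write `ω = B A⁻¹` and `M = ω ω̄`. Since conjugating the entries does not change the `ℓ²`
operator norm, `‖M‖ ≤ ‖ω‖ ‖ω̄‖ = ‖ω‖² ≤ κ²`. Every eigenvalue of `M` has modulus at most
`‖M‖`, so every eigenvalue of `1 - M` lies in the annulus `1 - κ² ≤ |μ| ≤ 1 + κ²`, and
`det (1 - M)` is the product of its `n` eigenvalues.
-/

/-- The `ℓ²` operator norm of an `n×n` complex matrix. -/
noncomputable def opNorm {n : ℕ} (M : Matrix (Fin n) (Fin n) ℂ) : ℝ :=
  ‖(Matrix.toEuclideanCLM (𝕜 := ℂ) M : EuclideanSpace ℂ (Fin n) →L[ℂ] EuclideanSpace ℂ (Fin n))‖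

open WithLp
open scoped Matrix.Norms.L2Operator

theorem opNorm_eq_l2_opNorm {n : ℕ} (M : Matrix (Fin n) (Fin n) ℂ) : opNorm M = ‖M‖ := rfl

namespace Multiset

variable {α : Type*} [NormedField α] {s : Multiset α}

theorem norm_prod_eq_prod_map_norm : ‖s.prod‖ = (s.map (‖·‖)).prod :=
  map_multiset_prod (normHom : α →*₀ ℝ) s

theorem pow_card_le_norm_prod {a : ℝ} (ha : 0 ≤ a) (h : ∀ z ∈ s, a ≤ ‖z‖) :
    a ^ card s ≤ ‖s.prod‖ := by
  have := prod_map_le_prod_map₀ (fun _ => a) (‖·‖) (fun _ _ => ha) h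
  rwa [map_const', prod_replicate, ← norm_prod_eq_prod_map_norm] at this

theorem norm_prod_le_pow_card {b : ℝ} (h : ∀ z ∈ s, ‖z‖ ≤ b) : ‖s.prod‖ ≤ b ^ card s := by
  have := prod_map_le_prod_map₀ (‖·‖) (fun _ => b) (fun _ _ => norm_nonneg _) h
  rwa [map_const', prod_replicate, ← norm_prod_eq_prod_map_norm] at this

end Multiset

namespace Matrix

variable {ι : Type*} [Fintype ι] [DecidableEq ι]

theorem l2_opNorm_map_conj_le {𝕜 : Type*} [RCLike 𝕜] (N : Matrix ι ι 𝕜) :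
    ‖N.map (starRingEnd 𝕜)‖ ≤ ‖N‖ := by
  let conj : EuclideanSpace 𝕜 ι → EuclideanSpace 𝕜 ι := fun v => toLp 2 (star (ofLp v))
  have norm_conj (v) : ‖conj v‖ = ‖v‖ := by simp [conj, EuclideanSpace.norm_eq]
  rw [cstar_norm_def (N.map _)]
  refine ContinuousLinearMap.opNorm_le_bound _ (norm_nonneg _) fun v => ?_
  have hv : toEuclideanCLM (𝕜 := 𝕜) (N.map (starRingEnd 𝕜)) v
      = conj (toEuclideanCLM (𝕜 := 𝕜) N (conj v)) := by
    ext i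
    simp [conj, mulVec, dotProduct]
  rw [hv, norm_conj, ← norm_conj v]
  exact (toEuclideanCLM (𝕜 := 𝕜) N).le_opNorm _

theorem l2_opNorm_map_conj {𝕜 : Type*} [RCLike 𝕜] (N : Matrix ι ι 𝕜) :
    ‖N.map (starRingEnd 𝕜)‖ = ‖N‖ := by
  refine le_antisymm (l2_opNorm_map_conj_le N) ?_
  simpa [Matrix.map_map, Function.comp_def] using l2_opNorm_map_conj_le (N.map (starRingEnd 𝕜))

variable {N : Matrix ι ι ℂ}

theorem pow_card_le_norm_det {a : ℝ} (ha : 0 ≤ a) (h : ∀ μ ∈ spectrum ℂ N, a ≤ ‖μ‖) :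
    a ^ Fintype.card ι ≤ ‖N.det‖ := by
  rw [det_eq_prod_roots_charpoly, ← N.charpoly_natDegree_eq_dim,
    (IsAlgClosed.splits N.charpoly).natDegree_eq_card_roots]
  exact Multiset.pow_card_le_norm_prod ha fun μ hμ =>
    h μ (mem_spectrum_of_isRoot_charpoly (Polynomial.isRoot_of_mem_roots hμ))

theorem norm_det_le_pow_card {b : ℝ} (h : ∀ μ ∈ spectrum ℂ N, ‖μ‖ ≤ b) :
    ‖N.det‖ ≤ b ^ Fintype.card ι := by
  rw [det_eq_prod_roots_charpoly, ← N.charpoly_natDegree_eq_dim,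
    (IsAlgClosed.splits N.charpoly).natDegree_eq_card_roots]
  exact Multiset.norm_prod_le_pow_card fun μ hμ =>
    h μ (mem_spectrum_of_isRoot_charpoly (Polynomial.isRoot_of_mem_roots hμ))

theorem norm_le_l2_opNorm_of_mem_spectrum {μ : ℂ} (hμ : μ ∈ spectrum ℂ N) : ‖μ‖ ≤ ‖N‖ := by
  cases isEmpty_or_nonempty ι
  · simp [spectrum.of_subsingleton] at hμ
  · exact spectrum.norm_le_norm_of_mem hμ

theorem norm_sub_one_le_of_mem_spectrum_one_sub {μ : ℂ} (hμ : μ ∈ spectrum ℂ (1 - N)) :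
    ‖1 - μ‖ ≤ ‖N‖ := by
  have : 1 - μ ∈ spectrum ℂ N := by
    rw [← sub_sub_cancel 1 N, ← map_one (algebraMap ℂ (Matrix ι ι ℂ)),
      ← spectrum.singleton_sub_eq]
    exact Set.sub_mem_sub rfl hμ
  exact norm_le_l2_opNorm_of_mem_spectrum this

theorem pow_card_le_norm_det_one_sub (hN : ‖N‖ ≤ 1) :
    (1 - ‖N‖) ^ Fintype.card ι ≤ ‖(1 - N).det‖ :=
  pow_card_le_norm_det (sub_nonneg.mpr hN) fun μ hμ => by
    have := norm_sub_one_le_of_mem_spectrum_one_sub hμ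
    have := norm_sub_norm_le (1 : ℂ) μ
    rw [norm_one] at this
    linarith

theorem norm_det_one_sub_le_pow_card : ‖(1 - N).det‖ ≤ (1 + ‖N‖) ^ Fintype.card ι :=
  norm_det_le_pow_card fun μ hμ => by
    have := norm_sub_one_le_of_mem_spectrum_one_sub hμ
    have := norm_le_norm_add_norm_sub' μ 1
    rw [norm_one, norm_sub_rev] at this
    linarith

end Matrix

open Matrix in
theorem stmt15_general {n : ℕ} (A B : Matrix (Fin n) (Fin n) ℂ)
    (κ : ℝ) (hκ0 : 0 ≤ κ) (hκ : κ < 1)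
    (hω : opNorm (B * A⁻¹) ≤ κ)
    (J : ℝ)
    (hJ : J = ‖A.det‖ ^ 2 *
      ‖(1 - (B * A⁻¹) * ((B * A⁻¹).map (starRingEnd ℂ))).det‖) :
    J ≤ ‖A.det‖ ^ 2 * (1 + κ ^ 2) ^ n ∧
      ‖A.det‖ ^ 2 * (1 - κ ^ 2) ^ n ≤ J := by
  set ω := B * A⁻¹
  rw [opNorm_eq_l2_opNorm] at hω
  have hM : ‖ω * ω.map (starRingEnd ℂ)‖ ≤ κ ^ 2 := calc
    _ ≤ ‖ω‖ * ‖ω.map (starRingEnd ℂ)‖ := l2_opNorm_mul _ _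
    _ = ‖ω‖ ^ 2 := by rw [l2_opNorm_map_conj, sq]
    _ ≤ κ ^ 2 := pow_le_pow_left₀ (norm_nonneg _) hω 2
  have hκ2 : κ ^ 2 ≤ 1 := pow_le_one₀ hκ0 hκ.le
  have hupper := norm_det_one_sub_le_pow_card (N := ω * ω.map (starRingEnd ℂ))
  have hlower := pow_card_le_norm_det_one_sub (hM.trans hκ2)
  rw [Fintype.card_fin] at hupper hlower
  subst hJ
  constructor
  · gcongr
    exact hupper.trans (pow_le_pow_left₀ (by positivity) (by linarith) n)
  · gcongr
    exact (pow_le_pow_left₀ (by linarith) (by linarith) n).trans hlower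

/-- For a pluriharmonic map `f = h + ḡ` with second dilation `ω = Dg·(Dh)⁻¹` of operator
norm at most `κ < 1`, the real Jacobian determinant satisfies
`|det J_f| = |det Dh|² |det(I - ω·ω̄)|` and hence
`|det Dh|²(1-κ²)ⁿ ≤ |det J_f| ≤ |det Dh|²(1+κ²)ⁿ`.  Here `A = Dh(z)`, `B = Dg(z)` are the
complex Jacobian matrices at a point `z ∈ 𝔹ⁿ`. -/
theorem stmt15 {n : ℕ} (A B : Matrix (Fin n) (Fin n) ℂ) (hA : IsUnit A.det)
    (κ : ℝ) (hκ0 : 0 ≤ κ) (hκ : κ < 1)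
    (hω : opNorm (B * A⁻¹) ≤ κ)
    (J : ℝ)
    (hJ : J = ‖A.det‖ ^ 2 *
      ‖(1 - (B * A⁻¹) * ((B * A⁻¹).map (starRingEnd ℂ))).det‖) :
    J ≤ ‖A.det‖ ^ 2 * (1 + κ ^ 2) ^ n ∧
      ‖A.det‖ ^ 2 * (1 - κ ^ 2) ^ n ≤ J :=
  stmt15_general A B κ hκ0 hκ hω J hJ
end
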